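/- For every fixed real polynomial P and every ε > 0, the vector a ∈ ℝ^N with entries a(k) = (P(t_k) - P(√ω k)) · (ω/π)^{1/4} e^{-ω k²/2}, where t_k = (2/√ω) sin(ω k/2), satisfies ‖a‖ = O(N^{-1+ε}) as N → ∞. -/

import Mathlib

/-!
Write `s = √ω`, so that `t_k = (2/s) sin(s · sk / 2)`. From `|sin x - x| ≤ |x|³/6` we get
`|t_k - sk| ≤ s² |sk|³ / 24` and `|t_k| ≤ |sk|`; since a polynomial is Lipschitz on `[-R, R]` with
constant `O((1 + R)^m)`, the squared `k`-th entry is at most `s⁵ · poly(u) · e^{-u²}` with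
`u = s|k|`. The Gaussian absorbs the polynomial factor down to `e^{-u}`, and the geometric series
`s · ∑ e^{-s|k|} ≤ 2(1 + s)` leaves `‖a‖² = O(s⁴) = O(N⁻²)`, i.e. `‖a‖ = O(1/N)`.
-/

open Real Finset Filter Asymptotics

/-- The centered index set `I_N = {-⌈N/2⌉+1, ..., ⌊N/2⌋}`. -/
noncomputable def In (N : ℕ) : Finset ℤ := Finset.Icc (1 - ((N : ℤ) + 1) / 2) ((N : ℤ) / 2)

/-- `t_k = (2/√ω) sin(ω k / 2)` with `ω = 2π/N`. -/
noncomputable def t (N : ℕ) (k : ℤ) : ℝ := (2 / Real.sqrt (2 * π / N)) * Real.sin (π * k / N)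

open Polynomial

lemma abs_sin_sub_self_le (x : ℝ) : |sin x - x| ≤ |x| ^ 3 / 6 := by
  have key : ∀ y : ℝ, 0 ≤ y → |sin y - y| ≤ y ^ 3 / 6 := fun y hy =>
    abs_sub_le_iff.2 ⟨by linarith [sin_le hy, pow_nonneg hy 3], by linarith [sin_ge_sub_cube hy]⟩
  rcases le_total 0 x with hx | hx
  · simpa [abs_of_nonneg hx] using key x hx
  · rw [abs_of_nonpos hx, ← abs_neg, show -(sin x - x) = sin (-x) - -x by rw [sin_neg]; ring]
    exact key (-x) (neg_nonneg.2 hx)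

lemma abs_eval_le (Q : ℝ[X]) {x R : ℝ} (hx : |x| ≤ R) :
    |Q.eval x| ≤ (∑ i ∈ range (Q.natDegree + 1), |Q.coeff i|) * (1 + R) ^ Q.natDegree := by
  have hR : 1 ≤ 1 + R := by linarith [abs_nonneg x]
  rw [eval_eq_sum_range, sum_mul]
  refine (abs_sum_le_sum_abs _ _).trans (sum_le_sum fun i hi => ?_)
  rw [abs_mul, abs_pow]
  gcongr
  calc |x| ^ i ≤ (1 + R) ^ i := by gcongr; linarith
    _ ≤ (1 + R) ^ Q.natDegree := pow_le_pow_right₀ hR (Nat.lt_succ_iff.1 (mem_range.1 hi))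

lemma exists_abs_eval_sub_eval_le (P : ℝ[X]) : ∃ C m, 0 ≤ C ∧ ∀ {R x y : ℝ}, |x| ≤ R → |y| ≤ R →
    |P.eval x - P.eval y| ≤ C * (1 + R) ^ m * |x - y| := by
  set Q := P.derivative
  refine ⟨∑ i ∈ range (Q.natDegree + 1), |Q.coeff i|, Q.natDegree,
    sum_nonneg fun i _ => abs_nonneg _, fun {R x y} hx hy => ?_⟩
  have hI : ∀ {z : ℝ}, |z| ≤ R → z ∈ Set.Icc (-R) R := fun h => abs_le.1 h
  have hderiv : ∀ z ∈ Set.Icc (-R) R, ‖deriv (fun z => P.eval z) z‖ ≤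
      (∑ i ∈ range (Q.natDegree + 1), |Q.coeff i|) * (1 + R) ^ Q.natDegree := fun z hz => by
    rw [Polynomial.deriv, Real.norm_eq_abs]
    exact abs_eval_le _ (abs_le.2 hz)
  simpa only [Real.norm_eq_abs] using (convex_Icc (-R) R).norm_image_sub_le_of_norm_deriv_le
    (fun z _ => P.differentiableAt) hderiv (hI hy) (hI hx)

lemma one_add_pow_mul_exp_neg_sq_le (m : ℕ) {u : ℝ} (hu : 0 ≤ u) :
    (1 + u) ^ m * exp (-u ^ 2) ≤ (m.factorial : ℝ) * exp 2 * exp (-u) := by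
  have hfact : (0 : ℝ) < (m.factorial : ℝ) := by exact_mod_cast m.factorial_pos
  have hpow : (1 + u) ^ m ≤ (m.factorial : ℝ) * exp (1 + u) := by
    rw [← div_le_iff₀' hfact]; exact pow_div_factorial_le_exp _ (by linarith) m
  calc (1 + u) ^ m * exp (-u ^ 2) ≤ (m.factorial : ℝ) * exp (1 + u) * exp (-u ^ 2) := by gcongr
    _ = (m.factorial : ℝ) * exp (1 + u - u ^ 2) := by rw [mul_assoc, ← exp_add, sub_eq_add_neg]
    _ ≤ (m.factorial : ℝ) * (exp 2 * exp (-u)) := by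
        rw [← exp_add]; gcongr; nlinarith [sq_nonneg (u - 1)]
    _ = (m.factorial : ℝ) * exp 2 * exp (-u) := by ring

lemma sum_pow_natAbs_le {r : ℝ} (h0 : 0 ≤ r) (h1 : r < 1) (A : Finset ℤ) :
    ∑ k ∈ A, r ^ k.natAbs ≤ (1 + r) / (1 - r) := by
  have hpos : HasSum (fun n : ℕ => r ^ (n : ℤ).natAbs) (1 - r)⁻¹ := by
    simpa using hasSum_geometric_of_lt_one h0 h1
  have hneg : HasSum (fun n : ℕ => r ^ (-((n : ℤ) + 1)).natAbs) (r * (1 - r)⁻¹) := by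
    have e : (fun n : ℕ => r ^ (-((n : ℤ) + 1)).natAbs) = fun n => r * r ^ n := by
      funext n
      rw [Int.natAbs_neg, ← Nat.cast_succ, Int.natAbs_natCast, pow_succ']
    rw [e]; exact (hasSum_geometric_of_lt_one h0 h1).mul_left r
  have hsum := sum_le_hasSum A (fun k _ => by positivity)
    (HasSum.of_nat_of_neg_add_one (f := fun k : ℤ => r ^ k.natAbs) hpos hneg)
  rwa [show (1 - r)⁻¹ + r * (1 - r)⁻¹ = (1 + r) / (1 - r) by ring] at hsum

lemma mul_sum_exp_neg_mul_abs_le {s : ℝ} (hs : 0 < s) (A : Finset ℤ) :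
    s * ∑ k ∈ A, exp (-(s * |(k : ℝ)|)) ≤ 2 * (1 + s) := by
  set r := exp (-s)
  have hr1 : r < 1 := exp_lt_one_iff.2 (neg_lt_zero.2 hs)
  have hr : r * (1 + s) ≤ 1 := calc
    r * (1 + s) ≤ r * exp s := by gcongr; linarith [add_one_le_exp s]
    _ = 1 := by rw [← exp_add, neg_add_cancel, exp_zero]
  have hterm : ∀ k : ℤ, exp (-(s * |(k : ℝ)|)) = r ^ k.natAbs := by
    intro k; rw [← exp_nat_mul, Nat.cast_natAbs, Int.cast_abs]; ring_nf
  simp only [hterm]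
  calc s * ∑ k ∈ A, r ^ k.natAbs ≤ s * ((1 + r) / (1 - r)) := by
        gcongr; exact sum_pow_natAbs_le (exp_pos _).le hr1 A
    _ ≤ 2 * (1 + s) := by
        rw [mul_div_assoc', div_le_iff₀ (sub_pos.2 hr1)]
        nlinarith [exp_pos (-s)]

lemma abs_two_div_mul_sin_le {s : ℝ} (hs : 0 < s) (v : ℝ) : |2 / s * sin (s * v / 2)| ≤ |v| := by
  rw [abs_mul, abs_of_pos (by positivity : 0 < 2 / s)]
  calc 2 / s * |sin (s * v / 2)| ≤ 2 / s * |s * v / 2| := by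
        gcongr _ * ?_; exact abs_sin_le_abs
    _ = |v| := by rw [abs_div, abs_mul, abs_of_pos hs, abs_two]; field_simp

lemma abs_two_div_mul_sin_sub_le {s : ℝ} (hs : 0 < s) (v : ℝ) :
    |2 / s * sin (s * v / 2) - v| ≤ s ^ 2 * |v| ^ 3 / 24 := by
  have e : 2 / s * sin (s * v / 2) - v = 2 / s * (sin (s * v / 2) - s * v / 2) := by
    field_simp
  rw [e, abs_mul, abs_of_pos (by positivity : 0 < 2 / s)]
  calc 2 / s * |sin (s * v / 2) - s * v / 2| ≤ 2 / s * (|s * v / 2| ^ 3 / 6) := by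
        gcongr; exact abs_sin_sub_self_le _
    _ = s ^ 2 * |v| ^ 3 / 24 := by rw [abs_div, abs_mul, abs_of_pos hs, abs_two]; field_simp; ring

lemma rpow_one_div_four_sq {x : ℝ} (hx : 0 ≤ x) : (x ^ ((1 : ℝ) / 4)) ^ 2 = √x := by
  rw [← rpow_natCast, ← rpow_mul hx, sqrt_eq_rpow]; norm_num

lemma exists_sq_le_exp_neg_abs (P : ℝ[X]) : ∃ K, 0 ≤ K ∧ ∀ {s : ℝ}, 0 < s → ∀ v : ℝ,
    ((P.eval (2 / s * sin (s * v / 2)) - P.eval v) * (s ^ 2 / π) ^ ((1 : ℝ) / 4) *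
      exp (-v ^ 2 / 2)) ^ 2 ≤ K * s ^ 5 * exp (-|v|) := by
  obtain ⟨C, m, hC0, hC⟩ := exists_abs_eval_sub_eval_le P
  refine ⟨C ^ 2 * (2 * m + 6).factorial * exp 2 / 576, by positivity, fun {s} hs v => ?_⟩
  set u := |v|
  have hu : 0 ≤ u := abs_nonneg v
  have hdiff : |P.eval (2 / s * sin (s * v / 2)) - P.eval v| ≤
      C * (1 + u) ^ m * (s ^ 2 * u ^ 3 / 24) :=
    (hC (abs_two_div_mul_sin_le hs v) le_rfl).trans
      (by gcongr; exact abs_two_div_mul_sin_sub_le hs v)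
  have hweight : ((s ^ 2 / π) ^ ((1 : ℝ) / 4)) ^ 2 ≤ s := by
    rw [rpow_one_div_four_sq (by positivity)]
    calc √(s ^ 2 / π) ≤ √(s ^ 2) :=
          sqrt_le_sqrt (div_le_self (sq_nonneg s) (by linarith [pi_gt_three]))
      _ = s := sqrt_sq hs.le
  have hgauss : exp (-v ^ 2 / 2) ^ 2 = exp (-u ^ 2) := by
    rw [← exp_nat_mul, sq_abs]; ring_nf
  have hpow : (1 + u) ^ (2 * m) * u ^ 6 ≤ (1 + u) ^ (2 * m + 6) := by
    rw [pow_add]; gcongr; linarith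
  calc _ = |P.eval (2 / s * sin (s * v / 2)) - P.eval v| ^ 2 * ((s ^ 2 / π) ^ ((1 : ℝ) / 4)) ^ 2 *
        exp (-u ^ 2) := by rw [sq_abs, ← hgauss]; ring
    _ ≤ (C * (1 + u) ^ m * (s ^ 2 * u ^ 3 / 24)) ^ 2 * s * exp (-u ^ 2) := by gcongr
    _ = C ^ 2 * s ^ 5 / 576 * ((1 + u) ^ (2 * m) * u ^ 6 * exp (-u ^ 2)) := by ring
    _ ≤ C ^ 2 * s ^ 5 / 576 * ((2 * m + 6).factorial * exp 2 * exp (-u)) := by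
        gcongr _ * ?_
        exact (mul_le_mul_of_nonneg_right hpow (exp_pos _).le).trans
          (one_add_pow_mul_exp_neg_sq_le _ hu)
    _ = _ := by ring

lemma exists_sum_sq_le (P : ℝ[X]) : ∃ K, 0 ≤ K ∧ ∀ {s : ℝ}, 0 < s → ∀ A : Finset ℤ,
    ∑ k ∈ A, ((P.eval (2 / s * sin (s * (s * k) / 2)) - P.eval (s * k)) *
      (s ^ 2 / π) ^ ((1 : ℝ) / 4) * exp (-s ^ 2 * k ^ 2 / 2)) ^ 2 ≤ K * s ^ 4 * (1 + s) := by
  obtain ⟨K, hK0, hK⟩ := exists_sq_le_exp_neg_abs P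
  refine ⟨2 * K, by positivity, fun {s} hs A => ?_⟩
  calc _ ≤ ∑ k ∈ A, K * s ^ 5 * exp (-(s * |(k : ℝ)|)) := sum_le_sum fun k _ => by
        simpa only [abs_mul, abs_of_pos hs, mul_pow, neg_mul] using hK hs (s * k)
    _ = K * s ^ 4 * (s * ∑ k ∈ A, exp (-(s * |(k : ℝ)|))) := by
        rw [mul_sum, mul_sum]; exact sum_congr rfl fun k _ => by ring
    _ ≤ K * s ^ 4 * (2 * (1 + s)) := by gcongr K * s ^ 4 * ?_; exact mul_sum_exp_neg_mul_abs_le hs A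
    _ = _ := by ring

lemma t_eq_two_div_mul_sin {N : ℕ} (hN : 0 < N) (k : ℤ) :
    t N k = 2 / √(2 * π / N) * sin (√(2 * π / N) * (√(2 * π / N) * k) / 2) := by
  rw [t, ← mul_assoc, mul_self_sqrt (by positivity)]
  congr 2
  field_simp

lemma natCast_inv_isBigO_rpow {a : ℝ} (ha : -1 ≤ a) :
    (fun N : ℕ => (N : ℝ)⁻¹) =O[atTop] fun N => (N : ℝ) ^ a := by
  refine IsBigO.of_bound 1 ?_
  filter_upwards [eventually_ge_atTop 1] with N hN
  have hN1 : (1 : ℝ) ≤ N := by exact_mod_cast hN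
  rw [one_mul, norm_inv, Real.norm_natCast, norm_of_nonneg (by positivity), ← rpow_neg_one]
  exact rpow_le_rpow_of_exponent_le hN1 ha

theorem stmt_19 (P : Polynomial ℝ) (ε : ℝ) (hε : 0 < ε) :
    (fun N : ℕ => Real.sqrt (∑ k ∈ In N,
        ((P.eval (t N k) - P.eval (Real.sqrt (2 * π / N) * k)) *
          ((2 * π / N) / π) ^ ((1 : ℝ) / 4) * Real.exp (-(2 * π / N) * k ^ 2 / 2)) ^ 2))
      =O[atTop] fun N : ℕ => (N : ℝ) ^ (-1 + ε) := by
  obtain ⟨K, hK0, hK⟩ := exists_sum_sq_le P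
  refine IsBigO.trans (IsBigO.of_bound (4 * π * √K) ?_) (natCast_inv_isBigO_rpow (by linarith))
  filter_upwards [eventually_ge_atTop 1] with N hN
  simp_rw [t_eq_two_div_mul_sin hN]
  set s := √(2 * π / N)
  have hs : 0 < s := sqrt_pos.2 (by positivity)
  have hs2 : s ^ 2 = 2 * π / N := sq_sqrt (by positivity)
  have hs3 : s ≤ 3 := by
    have : 2 * π / N ≤ 2 * π := div_le_self (by positivity) (by exact_mod_cast hN)
    nlinarith [pi_lt_four]
  rw [← hs2, norm_of_nonneg (sqrt_nonneg _), norm_inv, Real.norm_natCast]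
  calc _ ≤ √(K * s ^ 4 * (1 + s)) := sqrt_le_sqrt (hK hs _)
    _ ≤ √((2 * s ^ 2) ^ 2 * K) := sqrt_le_sqrt <| calc
        K * s ^ 4 * (1 + s) ≤ K * s ^ 4 * 4 := by gcongr; linarith
        _ = (2 * s ^ 2) ^ 2 * K := by ring
    _ = 4 * π * √K * (N : ℝ)⁻¹ := by
        rw [sqrt_mul (sq_nonneg _), sqrt_sq (by positivity), hs2]; ring
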